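/- Let Q be a finite sequence of cyclically adjacent swaps for a permutation π of a set S of n elements whose net clockwise displacement vector d satisfies d(i) − d(j) ≤ n for all i, j ∈ S. Let k ∈ S satisfy d(k) = max_i d(i) or d(k) = min_i d(i), and define d'(i) = d(i) − c(i,k) for i ∈ S ∖ {k}. Then d'(i) − d'(j) ≤ n − 1 for all i, j ∈ S ∖ {k}. -/

import Mathlib

/-- The cyclic successor of `p` in the finite set `S`: the smallest element of `S`
greater than `p`, or `min S` if no such element exists. -/
def cycSucc (S : Finset ℕ) (p : ℕ) : ℕ :=
  if h : (S.filter (fun q => p < q)).Nonempty then (S.filter (fun q => p < q)).min' h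
  else if h' : S.Nonempty then S.min' h' else 0

/-- `π` is a permutation of the set `S`: it fixes every point outside `S`. -/
def IsPermOf (S : Finset ℕ) (π : Equiv.Perm ℕ) : Prop :=
  ∀ x, x ∉ S → π x = x

/-- Applying the swap `q = (i, j)` to `π`: elements `i` and `j` exchange positions
(element `i` moves clockwise, element `j` moves counterclockwise). -/
def applySwap (π : Equiv.Perm ℕ) (q : ℕ × ℕ) : Equiv.Perm ℕ :=
  π.trans (Equiv.swap (π q.1) (π q.2))

/-- `q = (i, j)` is a cyclically adjacent swap for the permutation `π` of `S`:
element `j` occupies the position that is the cyclic successor (in `S`) of the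
position of element `i`. -/
def IsCycSwap (S : Finset ℕ) (π : Equiv.Perm ℕ) (q : ℕ × ℕ) : Prop :=
  q.1 ∈ S ∧ q.2 ∈ S ∧ π q.2 = cycSucc S (π q.1)

/-- `Q` is a valid sequence of cyclically adjacent swaps for the permutation `π` of `S`. -/
def IsSwapSeq (S : Finset ℕ) : Equiv.Perm ℕ → List (ℕ × ℕ) → Prop
  | _, [] => True
  | π, q :: Q => IsCycSwap S π q ∧ IsSwapSeq S (applySwap π q) Q

/-- The permutation resulting from applying the swaps of `Q` in order to `π`. -/
def applySwaps (π : Equiv.Perm ℕ) (Q : List (ℕ × ℕ)) : Equiv.Perm ℕ :=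
  Q.foldl applySwap π

/-- `c(i,j)`: the number of times the swap `(i,j)` occurs in `Q` minus the number of
times the swap `(j,i)` occurs in `Q`. -/
def swapCount (Q : List (ℕ × ℕ)) (i j : ℕ) : ℤ :=
  (Q.count (i, j) : ℤ) - (Q.count (j, i) : ℤ)

/-- `d(i) = ∑_{j ≠ i} c(i,j)`: the net clockwise displacement of element `i ∈ S`. -/
def netDisp (S : Finset ℕ) (Q : List (ℕ × ℕ)) (i : ℕ) : ℤ :=
  ∑ j ∈ S.erase i, swapCount Q i j

/-- `i` is directly before `j` in the permutation `π` of `S`. -/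
def DirBefore (S : Finset ℕ) (π : Equiv.Perm ℕ) (i j : ℕ) : Prop :=
  (π i < π j ∧ ∀ ℓ ∈ S, ¬(π i < π ℓ ∧ π ℓ < π j)) ∨
    (S.max = (π i : WithBot ℕ) ∧ S.min = (π j : WithTop ℕ))

/-- `π'` is a permutation corresponding to `π` restricted to `S \ {k}`: it is a
permutation of `S.erase k` preserving the directly-before relationship, i.e.
`i ≺ j` in `π'` whenever `i ≺ j` in `π` or `i ≺ k ≺ j` in `π`. -/
def Corresponds (S : Finset ℕ) (k : ℕ) (π π' : Equiv.Perm ℕ) : Prop :=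
  IsPermOf (S.erase k) π' ∧
    ∀ i ∈ S.erase k, ∀ j ∈ S.erase k,
      (DirBefore S π i j ∨ (DirBefore S π i k ∧ DirBefore S π k j)) →
      DirBefore (S.erase k) π' i j


/-!
Lift the positions to integers: each element gets an unwrapped position, congruent modulo
`n = |S|` to the index of its current position, which moves by `±1` with every swap the element
takes part in, so that after `Q` element `i` has moved by `d(i)`. For `i ≠ k` the difference `D`
of the unwrapped positions of `i` and `k` is never divisible by `n`. The swap `(i,k)` can only
happen when `D ≡ -1 (mod n)`, and it moves `D` by `+2` across a multiple of `n`, the swap `(k,i)` symmetrically,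
and every other swap moves `D` by at most `1`, hence across no multiple of `n`. Therefore
`c(i,k) = ⌊(a + d(i) - d(k)) / n⌋ - ⌊a / n⌋` with `a` the initial difference, and
`d'(i) = d(k) + φ(a + d(i) - d(k)) - φ(a)` for `φ x = x - ⌊x / n⌋`. As `φ` is monotone with
`φ (x + n) = φ x + n - 1`, the bound follows from `d(i) ≤ d(k) ≤ d(j) + n` when `k` is a maximum,
and from `d(i) ≤ d(k) + n`, `d(k) ≤ d(j)` when it is a minimum.
-/

namespace Int

variable {N x y q : ℤ}

lemma ediv_eq_of_mul_le_of_lt (hN : 0 < N) (h₁ : N * q ≤ x) (h₂ : x < N * q + N) :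
    x / N = q :=
  ((Int.ediv_emod_unique hN).2 ⟨sub_add_cancel x _, sub_nonneg.2 h₁, by linarith⟩).1

lemma add_ediv_of_not_dvd (hN : 0 < N) (hx : ¬ N ∣ x) (hxy : ¬ N ∣ x + y) (hy : |y| ≤ 1) :
    (x + y) / N = x / N := by
  have hlo := mul_ediv_self_le (x := x) hN.ne'
  have hhi := lt_mul_ediv_self_add (x := x) hN
  have hx₀ : x ≠ N * (x / N) := fun h => hx ⟨_, h⟩
  have hxy₀ : x + y ≠ N * (x / N) := fun h => hxy ⟨_, h⟩
  have hxy₁ : x + y ≠ N * (x / N) + N := fun h => hxy ⟨x / N + 1, by rw [h]; ring⟩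
  rw [abs_le] at hy
  exact ediv_eq_of_mul_le_of_lt hN (by omega) (by omega)

lemma add_two_ediv_of_dvd_add_one (hN : 0 < N) (h₁ : N ∣ x + 1) (h₂ : ¬ N ∣ x + 2) :
    (x + 2) / N = x / N + 1 := by
  obtain ⟨m, hm⟩ := h₁
  have hN₁ : 1 < N := by
    obtain rfl | h := (by omega : N = 1 ∨ 1 < N)
    · exact absurd (one_dvd _) h₂
    · exact h
  rw [ediv_eq_of_mul_le_of_lt (q := m) (by omega) (by linarith) (by linarith),
    ediv_eq_of_mul_le_of_lt (q := m - 1) (by omega) (by linarith) (by linarith)]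
  ring

lemma sub_ediv_monotone (hN : 0 < N) : Monotone fun x : ℤ => x - x / N := by
  refine monotone_int_of_le_succ fun x => ?_
  have hx := lt_mul_ediv_self_add (x := x) hN
  have hx₁ : (x + 1) / N < x / N + 2 := (Int.ediv_lt_iff_lt_mul hN).2 (by linarith)
  show x - x / N ≤ x + 1 - (x + 1) / N
  linarith

lemma sub_ediv_sub_le (hN : 0 < N) (h : x ≤ y + N) :
    x - x / N - (y - y / N) ≤ N - 1 := by
  have hmono : x - x / N ≤ y + N - (y + N) / N := sub_ediv_monotone hN h
  have hyN : (y + N) / N = y / N + 1 := by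
    simpa using add_mul_ediv_left y 1 hN.ne'
  linarith

end Int

open Finset

def posIndex (S : Finset ℕ) (p : ℕ) : ℕ := #{s ∈ S | s < p}

section posIndex

variable {S : Finset ℕ} {p m : ℕ}

lemma posIndex_lt_card (hp : p ∈ S) : posIndex S p < #S :=
  card_lt_card (filter_ssubset.2 ⟨p, hp, lt_irrefl p⟩)

lemma posIndex_strictMonoOn : StrictMonoOn (posIndex S) S := by
  intro p hp m _ hpm
  refine card_lt_card ((ssubset_iff_of_subset ?_).2 ⟨p, ?_, ?_⟩)
  · exact monotone_filter_right S fun s _ hs => hs.trans hpm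
  · exact mem_filter.2 ⟨hp, hpm⟩
  · simp

lemma natCast_posIndex_injOn : Set.InjOn (fun p => (posIndex S p : ZMod #S)) S := by
  intro p hp m hm h
  rw [ZMod.natCast_eq_natCast_iff', Nat.mod_eq_of_lt (posIndex_lt_card hp),
    Nat.mod_eq_of_lt (posIndex_lt_card hm)] at h
  exact posIndex_strictMonoOn.injOn hp hm h

lemma posIndex_eq_zero (h : ∀ s ∈ S, p ≤ s) : posIndex S p = 0 :=
  card_eq_zero.2 (filter_eq_empty_iff.2 fun s hs => not_lt.2 (h s hs))

lemma posIndex_add_one_eq_card (hp : p ∈ S) (h : ∀ s ∈ S, s ≤ p) : posIndex S p + 1 = #S := by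
  rw [posIndex, ← card_erase_add_one hp]
  congr 2
  ext s
  simp only [mem_filter, mem_erase]
  exact ⟨fun ⟨hs, hsp⟩ => ⟨hsp.ne, hs⟩, fun ⟨hsp, hs⟩ => ⟨hs, lt_of_le_of_ne (h s hs) hsp⟩⟩

lemma posIndex_of_next (hp : p ∈ S) (hpm : p < m) (hm : ∀ s ∈ S, p < s → m ≤ s) :
    posIndex S m = posIndex S p + 1 := by
  have : {s ∈ S | s < m} = insert p {s ∈ S | s < p} := by
    ext s
    simp only [mem_filter, mem_insert]
    refine ⟨fun ⟨hs, hsm⟩ => ?_, ?_⟩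
    · rcases lt_trichotomy s p with hsp | rfl | hps
      · exact .inr ⟨hs, hsp⟩
      · exact .inl rfl
      · exact absurd (hm s hs hps) (not_le.2 hsm)
    · rintro (rfl | ⟨hs, hsp⟩)
      · exact ⟨hp, hpm⟩
      · exact ⟨hs, hsp.trans hpm⟩
  rw [posIndex, posIndex, this, card_insert_of_notMem (by simp)]

lemma natCast_posIndex_cycSucc (hp : p ∈ S) :
    (posIndex S (cycSucc S p) : ZMod #S) = posIndex S p + 1 := by
  unfold cycSucc
  split_ifs with h h'
  · have hm := mem_filter.1 (min'_mem _ h)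
    rw [posIndex_of_next hp hm.2 fun s hs hps => min'_le _ s (mem_filter.2 ⟨hs, hps⟩),
      Nat.cast_add_one]
  · have hmax : ∀ s ∈ S, s ≤ p := fun s hs => not_lt.1 fun hps => h ⟨s, mem_filter.2 ⟨hs, hps⟩⟩
    rw [posIndex_eq_zero (min'_le S), ← Nat.cast_add_one, posIndex_add_one_eq_card hp hmax,
      ZMod.natCast_self, Nat.cast_zero]
  · exact absurd ⟨p, hp⟩ h'

lemma cycSucc_ne_self (hS : 1 < #S) (hp : p ∈ S) : cycSucc S p ≠ p := by
  have : Fact (1 < #S) := ⟨hS⟩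
  intro h
  have hidx := natCast_posIndex_cycSucc hp
  rw [h, left_eq_add] at hidx
  exact one_ne_zero hidx

end posIndex

section counts

variable {S : Finset ℕ} {Q₁ Q₂ : List (ℕ × ℕ)} {u v x i j : ℕ}

lemma swapCount_append : swapCount (Q₁ ++ Q₂) i j = swapCount Q₁ i j + swapCount Q₂ i j := by
  simp only [swapCount, List.count_append]
  push_cast
  ring

lemma netDisp_append : netDisp S (Q₁ ++ Q₂) i = netDisp S Q₁ i + netDisp S Q₂ i := by
  simp only [netDisp, swapCount_append, sum_add_distrib]

lemma swapCount_singleton :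
    swapCount [(u, v)] i j =
      (if (u, v) = (i, j) then 1 else 0) - (if (u, v) = (j, i) then 1 else 0) := by
  simp [swapCount, List.count_singleton]

lemma netDisp_singleton (hu : u ∈ S) (hv : v ∈ S) :
    netDisp S [(u, v)] x = (if x = u then 1 else 0) - (if x = v then 1 else 0) := by
  simp only [netDisp, swapCount_singleton, sum_sub_distrib, Prod.mk.injEq, ite_and,
    sum_ite_irrel, sum_ite_eq, mem_erase, ne_eq, hu, hv, and_true, ite_not, sum_const_zero]
  split_ifs <;> omega

end counts

lemma applySwap_apply (π : Equiv.Perm ℕ) (u v x : ℕ) :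
    applySwap π (u, v) x = if x = u then π v else if x = v then π u else π x := by
  simp [applySwap, Equiv.swap_apply_def, π.injective.eq_iff]

section swaps

variable {S : Finset ℕ} {π : Equiv.Perm ℕ} {u v : ℕ}

lemma IsPermOf.apply_mem (hπ : IsPermOf S π) {x : ℕ} (hx : x ∈ S) : π x ∈ S := by
  by_contra h
  rw [π.injective (hπ _ h)] at h
  exact h hx

lemma IsPermOf.applySwap (hπ : IsPermOf S π) (hu : u ∈ S) (hv : v ∈ S) :
    IsPermOf S (applySwap π (u, v)) := by
  intro x hx
  rw [applySwap_apply, if_neg (ne_of_mem_of_not_mem hu hx).symm,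
    if_neg (ne_of_mem_of_not_mem hv hx).symm, hπ x hx]

lemma IsCycSwap.fst_ne_snd (hπ : IsPermOf S π) (hq : IsCycSwap S π (u, v)) (hS : 1 < #S) :
    u ≠ v := by
  rintro rfl
  exact cycSucc_ne_self hS (hπ.apply_mem hq.1) hq.2.2.symm

end swaps

def LiftsPositions (S : Finset ℕ) (π : Equiv.Perm ℕ) (U : ℕ → ℤ) : Prop :=
  ∀ x ∈ S, (U x : ZMod #S) = posIndex S (π x)

namespace LiftsPositions

variable {S : Finset ℕ} {π : Equiv.Perm ℕ} {U : ℕ → ℤ} {u v i k : ℕ}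

lemma not_dvd_sub (hπ : IsPermOf S π) (hU : LiftsPositions S π U) (hi : i ∈ S) (hk : k ∈ S)
    (hik : i ≠ k) : ¬ (#S : ℤ) ∣ U i - U k := by
  rw [← ZMod.intCast_zmod_eq_zero_iff_dvd, Int.cast_sub, hU i hi, hU k hk, sub_eq_zero]
  exact fun h => hik (π.injective (natCast_posIndex_injOn (hπ.apply_mem hi) (hπ.apply_mem hk) h))

lemma dvd_sub_add_one (hπ : IsPermOf S π) (hq : IsCycSwap S π (u, v))
    (hU : LiftsPositions S π U) : (#S : ℤ) ∣ U u - U v + 1 := by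
  obtain ⟨hu, hv, hsucc⟩ := hq
  rw [← ZMod.intCast_zmod_eq_zero_iff_dvd]
  push_cast
  rw [hU u hu, hU v hv, hsucc, natCast_posIndex_cycSucc (hπ.apply_mem hu)]
  ring

lemma applySwap (hπ : IsPermOf S π) (hq : IsCycSwap S π (u, v)) (huv : u ≠ v)
    (hU : LiftsPositions S π U) :
    LiftsPositions S (applySwap π (u, v)) (U + netDisp S [(u, v)]) := by
  obtain ⟨hu, hv, hsucc⟩ := hq
  have hsucc' : (posIndex S (π v) : ZMod #S) = posIndex S (π u) + 1 := by
    rw [hsucc]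
    exact natCast_posIndex_cycSucc (hπ.apply_mem hu)
  intro x hx
  simp only [Pi.add_apply, netDisp_singleton hu hv, applySwap_apply, Int.cast_add, Int.cast_sub]
  obtain rfl | hxu := eq_or_ne x u
  · simp [huv, hU x hx, hsucc']
  obtain rfl | hxv := eq_or_ne x v
  · simp [hxu, hU x hx, hsucc']
  · simp [hxu, hxv, hU x hx]

end LiftsPositions

section swapCount

variable {S : Finset ℕ} {π : Equiv.Perm ℕ} {U : ℕ → ℤ} {i k : ℕ}

lemma swapCount_singleton_eq_ediv {u v : ℕ} (hπ : IsPermOf S π) (hq : IsCycSwap S π (u, v))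
    (hU : LiftsPositions S π U) (hi : i ∈ S) (hk : k ∈ S) (hik : i ≠ k) :
    swapCount [(u, v)] i k =
      (U i - U k + (netDisp S [(u, v)] i - netDisp S [(u, v)] k)) / #S - (U i - U k) / #S := by
  have hN : (0 : ℤ) < #S := by simpa using card_pos.2 ⟨i, hi⟩
  have huv := hq.fst_ne_snd hπ (one_lt_card.2 ⟨i, hi, k, hk, hik⟩)
  have hD := hU.not_dvd_sub hπ hi hk hik
  have hD' := (hU.applySwap hπ hq huv).not_dvd_sub (hπ.applySwap hq.1 hq.2.1) hi hk hik
  rw [Pi.add_apply, Pi.add_apply, add_sub_add_comm] at hD'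
  have hadj := hU.dvd_sub_add_one hπ hq
  by_cases h₁ : (u, v) = (i, k)
  · obtain ⟨rfl, rfl⟩ := Prod.mk.inj h₁
    have hδ : netDisp S [(u, v)] u - netDisp S [(u, v)] v = 2 := by
      simp [netDisp_singleton hi hk, huv, huv.symm]
    rw [hδ] at hD' ⊢
    rw [Int.add_two_ediv_of_dvd_add_one hN hadj hD']
    simp [swapCount_singleton, huv]
  by_cases h₂ : (u, v) = (k, i)
  · obtain ⟨rfl, rfl⟩ := Prod.mk.inj h₂
    have hδ : netDisp S [(u, v)] v - netDisp S [(u, v)] u = -2 := by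
      simp [netDisp_singleton hk hi, huv, huv.symm]
    rw [hδ] at hD' ⊢
    have h := Int.add_two_ediv_of_dvd_add_one (x := U v - U u + -2) hN
      (by rw [show U v - U u + -2 + 1 = -(U u - U v + 1) by ring]; exact hadj.neg_right)
      (by rwa [show U v - U u + -2 + 2 = U v - U u by ring])
    rw [show U v - U u + -2 + 2 = U v - U u by ring] at h
    rw [h]
    simp [swapCount_singleton, huv]
  have hδ : |netDisp S [(u, v)] i - netDisp S [(u, v)] k| ≤ 1 := by
    rw [netDisp_singleton hq.1 hq.2.1, netDisp_singleton hq.1 hq.2.1, abs_le]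
    rw [Prod.mk.injEq, not_and_or] at h₁ h₂
    split_ifs <;> omega
  rw [Int.add_ediv_of_not_dvd hN hD hD' hδ]
  simp [swapCount_singleton, h₁, h₂]

lemma swapCount_eq_ediv (hi : i ∈ S) (hk : k ∈ S) (hik : i ≠ k) (Q : List (ℕ × ℕ))
    (hπ : IsPermOf S π) (hQ : IsSwapSeq S π Q) (hU : LiftsPositions S π U) :
    swapCount Q i k =
      (U i - U k + (netDisp S Q i - netDisp S Q k)) / #S - (U i - U k) / #S := by
  induction Q generalizing π U with
  | nil => simp [swapCount, netDisp]
  | cons q Q ih =>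
    obtain ⟨u, v⟩ := q
    obtain ⟨hq, hQ⟩ := hQ
    have huv := hq.fst_ne_snd hπ (one_lt_card.2 ⟨i, hi, k, hk, hik⟩)
    rw [← List.singleton_append, swapCount_append, netDisp_append, netDisp_append,
      swapCount_singleton_eq_ediv hπ hq hU hi hk hik,
      ih (hπ.applySwap hq.1 hq.2.1) hQ (hU.applySwap hπ hq huv), Pi.add_apply, Pi.add_apply]
    ring_nf

end swapCount

theorem restricted_disp_bound_general (S : Finset ℕ)
    (n : ℕ) (hcard : S.card = n)
    (π : Equiv.Perm ℕ) (hπ : IsPermOf S π)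
    (Q : List (ℕ × ℕ)) (hQ : IsSwapSeq S π Q)
    (hopt : ∀ i ∈ S, ∀ j ∈ S, netDisp S Q i - netDisp S Q j ≤ (n : ℤ))
    (k : ℕ) (hk : k ∈ S)
    (hext : (∀ i ∈ S, netDisp S Q i ≤ netDisp S Q k) ∨
      (∀ i ∈ S, netDisp S Q k ≤ netDisp S Q i)) :
    ∀ i ∈ S.erase k, ∀ j ∈ S.erase k,
      (netDisp S Q i - swapCount Q i k) - (netDisp S Q j - swapCount Q j k) ≤
        (n : ℤ) - 1 := by
  subst hcard
  intro i hi j hj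
  obtain ⟨hik, hi⟩ := mem_erase.1 hi
  obtain ⟨hjk, hj⟩ := mem_erase.1 hj
  have hN : (0 : ℤ) < #S := by exact_mod_cast card_pos.2 ⟨k, hk⟩
  have hU : LiftsPositions S π fun x => posIndex S (π x) := fun _ _ => Int.cast_natCast _
  rw [swapCount_eq_ediv hi hk hik Q hπ hQ hU, swapCount_eq_ediv hj hk hjk Q hπ hQ hU]
  set N : ℤ := (#S : ℤ)
  set a := (posIndex S (π i) : ℤ) - posIndex S (π k)
  set b := (posIndex S (π j) : ℤ) - posIndex S (π k)
  set A := a + (netDisp S Q i - netDisp S Q k) with hA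
  set B := b + (netDisp S Q j - netDisp S Q k) with hB
  rcases hext with hmax | hmin
  · have hi' : A - A / N ≤ a - a / N := Int.sub_ediv_monotone hN (by linarith [hmax i hi])
    have hj' := Int.sub_ediv_sub_le hN (by linarith [hopt k hk j hj] : b ≤ B + N)
    linarith
  · have hj' : b - b / N ≤ B - B / N := Int.sub_ediv_monotone hN (by linarith [hmin j hj])
    have hi' := Int.sub_ediv_sub_le hN (by linarith [hopt i hi k hk] : A ≤ a + N)
    linarith

/-- If the net displacement vector of a sequence of cyclically adjacent swaps satisfies
`d(i) - d(j) ≤ n` for all `i, j ∈ S`, `k ∈ S` attains the maximum or the minimum of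
`d`, and `d'(i) = d(i) - c(i,k)`, then `d'(i) - d'(j) ≤ n - 1` for all
`i, j ∈ S \ {k}`. -/
theorem restricted_disp_bound (S : Finset ℕ) (hpos : ∀ x ∈ S, 0 < x)
    (n : ℕ) (hcard : S.card = n)
    (π : Equiv.Perm ℕ) (hπ : IsPermOf S π)
    (Q : List (ℕ × ℕ)) (hQ : IsSwapSeq S π Q)
    (hopt : ∀ i ∈ S, ∀ j ∈ S, netDisp S Q i - netDisp S Q j ≤ (n : ℤ))
    (k : ℕ) (hk : k ∈ S)
    (hext : (∀ i ∈ S, netDisp S Q i ≤ netDisp S Q k) ∨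
      (∀ i ∈ S, netDisp S Q k ≤ netDisp S Q i)) :
    ∀ i ∈ S.erase k, ∀ j ∈ S.erase k,
      (netDisp S Q i - swapCount Q i k) - (netDisp S Q j - swapCount Q j k) ≤
        (n : ℤ) - 1 :=
  restricted_disp_bound_general S n hcard π hπ Q hQ hopt k hk hext
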